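/- arXiv:1307.5392 — 3 statements merged into one kernel-verified Lean document; each statement's English description precedes it below -/
import Mathlib

section
/- Let G be a group, H a subgroup of G, and S a right transversal of H in G containing the identity. Let R be an equivalence relation on S satisfying: (i) (congruence property) for all x, x', y, y' ∈ S with R x x' and R y y', and all z, z' ∈ S with z ∈ Hxy and z' ∈ Hx'y', one has R z z'; and (ii) for every h ∈ H and x, x' ∈ S with x' ∈ Hxh, one has R x x'. Let T₁ = { t ∈ S : R t 1 } be the R-class of the identity. Then the subset N = H · T₁ = { h * t : h ∈ H, t ∈ T₁ } of G is a normal subgroup of G, and for h ∈ H and x ∈ S one has h * x ∈ N if and only if R x 1. -/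
/-!
Let `t g` be the representative in `S` of the coset `H g`; pulling `R` back along `t` gives the
relation `R (t a) (t b)` on `G`. It is a congruence of the group `G`: writing `b = m * t b` with
`m ∈ H`, the coset `H (a * b)` is `H (x * t b)` for `x = t (t a * m)`, which is `R`-related to
`t a` because `R` is `H`-invariant, so the congruence property of `R` on `S` applies. Hence `N` is
the kernel of the quotient map by this congruence, and `h * x ∈ N ↔ R x 1` because
`t (h * x) = x`.
-/

namespace Subgroup

variable {G : Type*} [Group G] {H : Subgroup G} {S : Set G}

theorem isComplement_of_existsUnique_eq_mul
    (hS : ∀ g : G, ∃! s, s ∈ S ∧ ∃ h ∈ H, g = h * s) : IsComplement (H : Set G) S := by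
  refine isComplement_iff_existsUnique_mul_inv_mem.mpr fun g => ?_
  obtain ⟨s, ⟨hs, h, hh, rfl⟩, huniq⟩ := hS g
  refine ⟨⟨s, hs⟩, by simpa using hh, fun y hy => Subtype.ext ?_⟩
  exact huniq y ⟨y.2, _, hy, by group⟩

theorem IsComplement.toRightFun_eq_of_mul_inv_mem (hS : IsComplement (H : Set G) S) {g s : G}
    (hs : s ∈ S) (hg : g * s⁻¹ ∈ H) : (hS.toRightFun g : G) = s :=
  congrArg Subtype.val <| (isComplement_iff_existsUnique_mul_inv_mem.mp hS g).unique
    (hS.mul_inv_toRightFun_mem g) (y₂ := ⟨s, hs⟩) hg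

theorem IsComplement.toRightFun_one (hS : IsComplement (H : Set G) S) (h1 : (1 : G) ∈ S) :
    (hS.toRightFun 1 : G) = 1 :=
  hS.toRightFun_eq_of_mul_inv_mem h1 (by simp)

theorem IsComplement.toRightFun_mul_of_mem (hS : IsComplement (H : Set G) S) {h x : G}
    (hh : h ∈ H) (hx : x ∈ S) : (hS.toRightFun (h * x) : G) = x :=
  hS.toRightFun_eq_of_mul_inv_mem hx (by simpa using hh)

theorem IsComplement.exists_mem_and_eq_mul_iff (hS : IsComplement (H : Set G) S) (p : G → Prop)
    (g : G) : (∃ h ∈ H, ∃ s ∈ S, p s ∧ g = h * s) ↔ p (hS.toRightFun g) := by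
  constructor
  · rintro ⟨h, hh, s, hs, hp, rfl⟩
    rwa [hS.toRightFun_mul_of_mem hh hs]
  · exact fun hp => ⟨_, hS.mul_inv_toRightFun_mem g, _, (hS.toRightFun g).2, hp, by group⟩

end Subgroup

open Subgroup

section

variable {G : Type*} [Group G]

/-- `cong` and `act` say, in coset form, that `R` is compatible with the induced operation `∘`
and the action `θ` on the transversal `S`. -/
structure IsTransversalCongruence (H : Subgroup G) (S : Set G) (R : G → G → Prop) : Prop where
  refl : ∀ x ∈ S, R x x
  symm : ∀ x ∈ S, ∀ y ∈ S, R x y → R y x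
  trans : ∀ x ∈ S, ∀ y ∈ S, ∀ z ∈ S, R x y → R y z → R x z
  cong : ∀ x ∈ S, ∀ x' ∈ S, ∀ y ∈ S, ∀ y' ∈ S, R x x' → R y y' →
    ∀ z ∈ S, ∀ z' ∈ S, (∃ h ∈ H, z = h * (x * y)) → (∃ h ∈ H, z' = h * (x' * y')) → R z z'
  act : ∀ h ∈ H, ∀ x ∈ S, ∀ x' ∈ S, (∃ k ∈ H, x' = k * (x * h)) → R x x'

namespace IsTransversalCongruence

variable {H : Subgroup G} {S : Set G} {R : G → G → Prop}

theorem exists_rel_toRightFun_mul (hR : IsTransversalCongruence H S R)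
    (hS : IsComplement (H : Set G) S) (a b : G) :
    ∃ x ∈ S, R (hS.toRightFun a) x ∧
      ∃ h ∈ H, (hS.toRightFun (a * b) : G) = h * (x * hS.toRightFun b) := by
  set m := b * (hS.toRightFun b : G)⁻¹
  have hm : m ∈ H := hS.mul_inv_toRightFun_mem b
  set x := hS.toRightFun (hS.toRightFun a * m)
  have hx : R (hS.toRightFun a) x :=
    hR.act m hm _ (hS.toRightFun a).2 _ x.2
      ⟨x * (hS.toRightFun a * m)⁻¹, hS.toRightFun_mul_inv_mem _, by group⟩
  -- `H (a * b) = H (t a * m * t b) = H (x * t b)`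
  refine ⟨x, x.2, hx, hS.toRightFun (a * b) * (a * b)⁻¹ * (a * (hS.toRightFun a : G)⁻¹) *
    (hS.toRightFun a * m * (x : G)⁻¹), ?_, by simp only [m]; group⟩
  exact mul_mem (mul_mem (hS.toRightFun_mul_inv_mem _) (hS.mul_inv_toRightFun_mem a))
    (hS.mul_inv_toRightFun_mem _)

def con (hR : IsTransversalCongruence H S R) (hS : IsComplement (H : Set G) S) : Con G where
  r a b := R (hS.toRightFun a) (hS.toRightFun b)
  iseqv :=
    { refl := fun a => hR.refl _ (hS.toRightFun a).2
      symm := hR.symm _ (hS.toRightFun _).2 _ (hS.toRightFun _).2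
      trans := hR.trans _ (hS.toRightFun _).2 _ (hS.toRightFun _).2 _ (hS.toRightFun _).2 }
  mul' {a a' b b'} ha hb := by
    obtain ⟨x, hx, hax, h, hh, hab⟩ := hR.exists_rel_toRightFun_mul hS a b
    obtain ⟨x', hx', hax', h', hh', hab'⟩ := hR.exists_rel_toRightFun_mul hS a' b'
    have hxa' : R x (hS.toRightFun a') :=
      hR.trans _ hx _ (hS.toRightFun a).2 _ (hS.toRightFun a').2
        (hR.symm _ (hS.toRightFun a).2 _ hx hax) ha
    exact hR.cong x hx x' hx' _ (hS.toRightFun b).2 _ (hS.toRightFun b').2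
      (hR.trans _ hx _ (hS.toRightFun a').2 _ hx' hxa' hax') hb
      _ (hS.toRightFun _).2 _ (hS.toRightFun _).2 ⟨h, hh, hab⟩ ⟨h', hh', hab'⟩

theorem mem_ker_mk'_con (hR : IsTransversalCongruence H S R) (hS : IsComplement (H : Set G) S)
    (h1 : (1 : G) ∈ S) (g : G) : g ∈ (hR.con hS).mk'.ker ↔ R (hS.toRightFun g) 1 := by
  rw [MonoidHom.mem_ker, Con.coe_mk', ← Con.coe_one, Con.eq]
  show R (hS.toRightFun g) (hS.toRightFun 1) ↔ _
  rw [hS.toRightFun_one h1]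

end IsTransversalCongruence

end

/-- Let `G` be a group, `H` a subgroup, and `S` a right transversal of
`H` in `G` containing the identity. Let `R` be an equivalence relation on `S` that is a
congruence for the induced operation and identifies `x` with `x θ h` for all `h ∈ H`.
Let `T₁ = {t ∈ S | R t 1}` be the class of the identity. Then `N = H · T₁` is a normal
subgroup of `G`, and for `h ∈ H`, `x ∈ S`, one has `h * x ∈ N ↔ R x 1`. -/
theorem HT1_normal {G : Type*} [Group G] (H : Subgroup G) (S : Set G)
    (h1 : (1 : G) ∈ S)
    (htrans : ∀ g : G, ∃! s, s ∈ S ∧ ∃ h ∈ H, g = h * s)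
    (R : G → G → Prop)
    (hrefl : ∀ x ∈ S, R x x)
    (hsymm : ∀ x ∈ S, ∀ y ∈ S, R x y → R y x)
    (htrans' : ∀ x ∈ S, ∀ y ∈ S, ∀ z ∈ S, R x y → R y z → R x z)
    (hcong : ∀ x ∈ S, ∀ x' ∈ S, ∀ y ∈ S, ∀ y' ∈ S, R x x' → R y y' →
      ∀ z ∈ S, ∀ z' ∈ S, (∃ h ∈ H, z = h * (x * y)) → (∃ h ∈ H, z' = h * (x' * y')) →
        R z z')
    (hact : ∀ h ∈ H, ∀ x ∈ S, ∀ x' ∈ S, (∃ k ∈ H, x' = k * (x * h)) → R x x') :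
    ∃ N : Subgroup G, N.Normal ∧
      (N : Set G) = {g : G | ∃ h ∈ H, ∃ t ∈ S, R t 1 ∧ g = h * t} ∧
      ∀ h ∈ H, ∀ x ∈ S, (h * x ∈ N ↔ R x 1) := by
  have hS : IsComplement (H : Set G) S := isComplement_of_existsUnique_eq_mul htrans
  have hR : IsTransversalCongruence H S R := ⟨hrefl, hsymm, htrans', hcong, hact⟩
  refine ⟨(hR.con hS).mk'.ker, inferInstance, ?_, fun h hh x hx => ?_⟩
  · ext g
    rw [SetLike.mem_coe, hR.mem_ker_mk'_con hS h1]
    exact (hS.exists_mem_and_eq_mul_iff (R · 1) g).symm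
  · rw [hR.mem_ker_mk'_con hS h1, hS.toRightFun_mul_of_mem hh hx]
end

section
/- Let G be a group, H a subgroup of G, and S a right transversal of H in G containing the identity. Let R be an equivalence relation on S satisfying: (i) (congruence property) for all x, x', y, y' ∈ S with R x x' and R y y', and all z, z' ∈ S with z ∈ Hxy and z' ∈ Hx'y', one has R z z'; and (ii) for every h ∈ H and x, x' ∈ S with x' ∈ Hxh, one has R x x'. Then the induced operation on S is associative modulo R: for all x, y, z ∈ S and all u, v, w, p ∈ S with u ∈ Hyz (u = y ∘ z), v ∈ Hxy (v = x ∘ y), w ∈ Hvz (w = (x ∘ y) ∘ z), and p ∈ Hxu (p = x ∘ (y ∘ z)), one has R w p. (Hence the quotient right loop S/R is a group.) -/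
/-! If `u = h * (y * z)` with `h ∈ H`, then `x * y * z = (x * h⁻¹) * u`, and `x * h⁻¹` lies in
the coset `H a` of `a = x θ h⁻¹`, which is `R`-related to `x`. Hence `(x ∘ y) ∘ z` lies in
`H (a * u)` while `x ∘ (y ∘ z)` lies in `H (x * u)`, and the congruence property applied to
`a R x` and `u R u` relates them. -/

theorem exists_rel_mem_coset_mul {G : Type*} [Group G] {H : Subgroup G} {S : Set G}
    {R : G → G → Prop}
    (hrep : ∀ g : G, ∃ s ∈ S, ∃ h ∈ H, g = h * s)
    (hact : ∀ h ∈ H, ∀ x ∈ S, ∀ x' ∈ S, (∃ k ∈ H, x' = k * (x * h)) → R x x')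
    {x h : G} (hx : x ∈ S) (hh : h ∈ H) :
    ∃ a ∈ S, R a x ∧ ∃ k ∈ H, x * h = k * a := by
  obtain ⟨a, ha, k, hk, hxh⟩ := hrep (x * h)
  have hx_eq : x = k * (a * h⁻¹) := by
    rw [← mul_assoc, ← hxh, mul_inv_cancel_right]
  exact ⟨a, ha, hact h⁻¹ (inv_mem hh) a ha x hx ⟨k, hk, hx_eq⟩, k, hk, hxh⟩

theorem assoc_mod_R_general {G : Type*} [Group G] (H : Subgroup G) (S : Set G)
    (htrans : ∀ g : G, ∃! s, s ∈ S ∧ ∃ h ∈ H, g = h * s)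
    (R : G → G → Prop)
    (hrefl : ∀ x ∈ S, R x x)
    (hcong : ∀ x ∈ S, ∀ x' ∈ S, ∀ y ∈ S, ∀ y' ∈ S, R x x' → R y y' →
      ∀ z ∈ S, ∀ z' ∈ S, (∃ h ∈ H, z = h * (x * y)) → (∃ h ∈ H, z' = h * (x' * y')) →
        R z z')
    (hact : ∀ h ∈ H, ∀ x ∈ S, ∀ x' ∈ S, (∃ k ∈ H, x' = k * (x * h)) → R x x')
    (x y z u v w p : G)
    (hx : x ∈ S)
    (hu : u ∈ S) (hw : w ∈ S) (hp : p ∈ S)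
    (hu' : ∃ h ∈ H, u = h * (y * z))
    (hv' : ∃ h ∈ H, v = h * (x * y))
    (hw' : ∃ h ∈ H, w = h * (v * z))
    (hp' : ∃ h ∈ H, p = h * (x * u)) :
    R w p := by
  obtain ⟨h₁, hh₁, rfl⟩ := hu'
  obtain ⟨h₂, hh₂, rfl⟩ := hv'
  obtain ⟨h₃, hh₃, rfl⟩ := hw'
  obtain ⟨a, ha, hax, k, hk, hxk⟩ :=
    exists_rel_mem_coset_mul (fun g => (htrans g).exists) hact hx (inv_mem hh₁)
  have hw_coset : ∃ h ∈ H, h₃ * (h₂ * (x * y) * z) = h * (a * (h₁ * (y * z))) := by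
    refine ⟨h₃ * h₂ * k, mul_mem (mul_mem hh₃ hh₂) hk, ?_⟩
    rw [eq_inv_mul_of_mul_eq hxk.symm]
    group
  exact hcong a ha x hx _ hu _ hu hax (hrefl _ hu) _ hw p hp hw_coset hp'

/-- Let `G` be a group, `H` a subgroup, and `S` a right transversal of
`H` in `G` containing the identity. Let `R` be an equivalence relation on `S` that is a
congruence for the induced operation and identifies `x` with `x θ h` for all `h ∈ H`.
Then the induced operation is associative modulo `R`: for `x, y, z ∈ S` and `u, v, w, p ∈ S`
with `u = y ∘ z`, `v = x ∘ y`, `w = (x ∘ y) ∘ z`, `p = x ∘ (y ∘ z)`, one has `R w p`. -/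
theorem assoc_mod_R {G : Type*} [Group G] (H : Subgroup G) (S : Set G)
    (h1 : (1 : G) ∈ S)
    (htrans : ∀ g : G, ∃! s, s ∈ S ∧ ∃ h ∈ H, g = h * s)
    (R : G → G → Prop)
    (hrefl : ∀ x ∈ S, R x x)
    (hsymm : ∀ x ∈ S, ∀ y ∈ S, R x y → R y x)
    (htrans' : ∀ x ∈ S, ∀ y ∈ S, ∀ z ∈ S, R x y → R y z → R x z)
    (hcong : ∀ x ∈ S, ∀ x' ∈ S, ∀ y ∈ S, ∀ y' ∈ S, R x x' → R y y' →
      ∀ z ∈ S, ∀ z' ∈ S, (∃ h ∈ H, z = h * (x * y)) → (∃ h ∈ H, z' = h * (x' * y')) →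
        R z z')
    (hact : ∀ h ∈ H, ∀ x ∈ S, ∀ x' ∈ S, (∃ k ∈ H, x' = k * (x * h)) → R x x')
    (x y z u v w p : G)
    (hx : x ∈ S) (hy : y ∈ S) (hz : z ∈ S)
    (hu : u ∈ S) (hv : v ∈ S) (hw : w ∈ S) (hp : p ∈ S)
    (hu' : ∃ h ∈ H, u = h * (y * z))
    (hv' : ∃ h ∈ H, v = h * (x * y))
    (hw' : ∃ h ∈ H, w = h * (v * z))
    (hp' : ∃ h ∈ H, p = h * (x * u)) :
    R w p :=
  assoc_mod_R_general H S htrans R hrefl hcong hact x y z u v w p hx hu hw hp hu' hv' hw' hp'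
end

section
/- Let G be a finite group and H a core-free subgroup of G. Suppose N is a normal subgroup of G containing H such that the index of H in N is 2. Then H is an elementary abelian 2-group: every element h ∈ H satisfies h² = 1, and H is commutative. (This is the group-theoretic form of the theorem: if S is a generating transversal of H in G admitting an order-2 invariant sub right loop T with S/T a group, then the group torsion G_S ≅ H is an elementary abelian 2-group.) -/
/-!
Every `n ∈ N` has `n ^ 2 ∈ H`, since `H` has index two in `N`. As `N` is normal, the same holds
for every conjugate of `n`, so `n ^ 2` lies in the normal core of `H`, which is trivial. Hence
`H ≤ N` has exponent dividing two, and a group of exponent two is abelian.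
-/

namespace Subgroup

variable {G : Type*} [Group G]

theorem sq_mem_of_relIndex_eq_two {H N : Subgroup G} (hidx : H.relIndex N = 2) {n : G}
    (hn : n ∈ N) : n ^ 2 ∈ H := by
  simpa [mem_subgroupOf] using sq_mem_of_index_two (H := H.subgroupOf N) hidx ⟨n, hn⟩

theorem pow_mem_normalCore_of_forall_pow_mem {H N : Subgroup G} [hN : N.Normal] {k : ℕ}
    (hpow : ∀ n ∈ N, n ^ k ∈ H) {n : G} (hn : n ∈ N) : n ^ k ∈ H.normalCore := fun g => by
  simpa [conj_pow] using hpow _ (hN.conj_mem n hn g)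

theorem mul_comm_of_forall_sq_eq_one {H : Subgroup G} (hsq : ∀ h ∈ H, h ^ 2 = 1) {a b : G}
    (ha : a ∈ H) (hb : b ∈ H) : a * b = b * a := by
  have hcomm : Commute (⟨a, ha⟩ : H) ⟨b, hb⟩ :=
    Commute.of_orderOf_dvd_two
      (fun x => orderOf_dvd_of_pow_eq_one (Subtype.ext (hsq x x.2))) _ _
  exact congrArg Subtype.val hcomm.eq

end Subgroup

theorem corefree_index_two_elementary_abelian_sub_general {G : Type*} [Group G]
    (H N : Subgroup G) [N.Normal] (hcf : H.normalCore = ⊥) (hHN : H ≤ N)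
    (hidx : H.relIndex N = 2) :
    (∀ h ∈ H, h ^ 2 = 1) ∧ (∀ a ∈ H, ∀ b ∈ H, a * b = b * a) := by
  have hsq : ∀ h ∈ H, h ^ 2 = 1 := fun h hh => by
    have hcore := Subgroup.pow_mem_normalCore_of_forall_pow_mem
      (fun _ => Subgroup.sq_mem_of_relIndex_eq_two hidx) (hHN hh)
    rwa [hcf, Subgroup.mem_bot] at hcore
  exact ⟨hsq, fun a ha b hb => Subgroup.mul_comm_of_forall_sq_eq_one hsq ha hb⟩

/-- Let `G` be a finite group and `H` a core-free subgroup of `G`.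
Suppose `N` is a normal subgroup of `G` containing `H` with `[N : H] = 2`. Then `H` is
an elementary abelian 2-group: every `h ∈ H` satisfies `h ^ 2 = 1`, and `H` is
commutative. -/
theorem corefree_index_two_elementary_abelian_sub {G : Type*} [Group G] [Finite G]
    (H N : Subgroup G) [N.Normal] (hcf : H.normalCore = ⊥) (hHN : H ≤ N)
    (hidx : H.relIndex N = 2) :
    (∀ h ∈ H, h ^ 2 = 1) ∧ (∀ a ∈ H, ∀ b ∈ H, a * b = b * a) :=
  corefree_index_two_elementary_abelian_sub_general H N hcf hHN hidx
end
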